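/- Existence of parameters ensuring positive normalization: let c̃_t satisfy c̃_t = c̃_{t+1}(1 + β̃η₀ + 2η₀²L²/B_e) + η₀²L³/B_e with c̃_{B_e} = 0 and constant β̃. Then c̃_0 = (q^{B_e} − 1)·D where q = 1 + β̃η₀ + 2η₀²L²/B_e and D = (η₀L³/B_e)/(β̃ + 2η₀L²/B_e), and moreover if c̃_0(1/β̃ + 2η₀) + η₀L < 1 then γ_t := η_t − (c̃_{t+1}/β̃)η_t − η_t²L − 2c̃_{t+1}η_t² > 0 for all 1 ≤ t ≤ B_e (with η_t ≤ η₀); in particular for every L, B_e there exist η₀ > 0 and β̃ > 1 satisfying this sufficient condition. -/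
import Mathlib


/-- The constant-coefficient affine recursion `c̃_t = q c̃_{t+1} + r` for `t < B_e`,
with `c̃_t = 0` for `t ≥ B_e`. -/
noncomputable def ctil (Be : ℕ) (q r : ℝ) : ℕ → ℝ := fun t =>
  if h : t < Be then q * ctil Be q r (t + 1) + r else 0
  termination_by t => Be - t
  decreasing_by omega

lemma ctil_stop (Be : ℕ) (q r : ℝ) (t : ℕ) (h : Be ≤ t) : ctil Be q r t = 0 := by
  rw [ctil]; simp [Nat.not_lt.2 h]

lemma ctil_closed (Be : ℕ) (q r : ℝ) (hq : q ≠ 1) :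
    ∀ n t, t + n = Be → ctil Be q r t = (q ^ n - 1) * (r / (q - 1)) := by
  intro n
  induction n with
  | zero =>
    intro t ht
    rw [ctil_stop Be q r t (by omega)]
    simp
  | succ n ih =>
    intro t ht
    have h1 : t < Be := by omega
    rw [ctil]
    simp only [h1, dif_pos]
    rw [ih (t + 1) (by omega)]
    have hq1 : q - 1 ≠ 0 := sub_ne_zero.2 hq
    field_simp
    ring

/-- Existence of parameters ensuring positive normalization: the recursion
`c̃_t = c̃_{t+1}(1 + β̃η₀ + 2η₀²L²/B_e) + η₀²L³/B_e`, `c̃_{B_e} = 0`, has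
`c̃_0 = (q^{B_e} - 1) D` with `q = 1 + β̃η₀ + 2η₀²L²/B_e` and
`D = (η₀L³/B_e)/(β̃ + 2η₀L²/B_e)`; if moreover `c̃_0(1/β̃ + 2η₀) + η₀L < 1` then
`γ_t = η_t - (c̃_{t+1}/β̃)η_t - η_t²L - 2c̃_{t+1}η_t² > 0` for all `1 ≤ t ≤ B_e`
(for any nonincreasing positive stepsizes `η_t ≤ η₀`); and such `η₀ > 0`, `β̃ > 1`
always exist. -/
theorem exists_positive_normalization
    (L : ℝ) (hL : 0 < L) (Be : ℕ) (hBe : 1 ≤ Be) :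
    (∀ η₀ βt : ℝ, 0 < η₀ → 0 < βt →
      ctil Be (1 + βt * η₀ + 2 * η₀ ^ 2 * L ^ 2 / Be) (η₀ ^ 2 * L ^ 3 / Be) 0
        = ((1 + βt * η₀ + 2 * η₀ ^ 2 * L ^ 2 / Be) ^ Be - 1) *
            ((η₀ * L ^ 3 / Be) / (βt + 2 * η₀ * L ^ 2 / Be))) ∧
    (∀ η₀ βt : ℝ, 0 < η₀ → 0 < βt →
      ∀ η : ℕ → ℝ, (∀ t, 0 < η t) → (∀ t, η t ≤ η₀) → Antitone η →
      ctil Be (1 + βt * η₀ + 2 * η₀ ^ 2 * L ^ 2 / Be) (η₀ ^ 2 * L ^ 3 / Be) 0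
          * (1 / βt + 2 * η₀) + η₀ * L < 1 →
      ∀ t, 1 ≤ t → t ≤ Be →
        0 < η t - (ctil Be (1 + βt * η₀ + 2 * η₀ ^ 2 * L ^ 2 / Be)
              (η₀ ^ 2 * L ^ 3 / Be) (t + 1)) / βt * η t
            - η t ^ 2 * L
            - 2 * (ctil Be (1 + βt * η₀ + 2 * η₀ ^ 2 * L ^ 2 / Be)
              (η₀ ^ 2 * L ^ 3 / Be) (t + 1)) * η t ^ 2) ∧
    (∃ η₀ βt : ℝ, 0 < η₀ ∧ 1 < βt ∧
      ctil Be (1 + βt * η₀ + 2 * η₀ ^ 2 * L ^ 2 / Be) (η₀ ^ 2 * L ^ 3 / Be) 0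
          * (1 / βt + 2 * η₀) + η₀ * L < 1) := by
  have hBe0 : (0:ℝ) < (Be : ℝ) := by exact_mod_cast Nat.pos_of_ne_zero (by omega)
  -- general facts for positive η₀, βt
  have key : ∀ η₀ βt : ℝ, 0 < η₀ → 0 < βt →
      ctil Be (1 + βt * η₀ + 2 * η₀ ^ 2 * L ^ 2 / Be) (η₀ ^ 2 * L ^ 3 / Be) 0
        = ((1 + βt * η₀ + 2 * η₀ ^ 2 * L ^ 2 / Be) ^ Be - 1) *
            ((η₀ * L ^ 3 / Be) / (βt + 2 * η₀ * L ^ 2 / Be)) := by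
    intro η₀ βt hη₀ hβt
    set q : ℝ := 1 + βt * η₀ + 2 * η₀ ^ 2 * L ^ 2 / Be with hqdef
    set r : ℝ := η₀ ^ 2 * L ^ 3 / Be with hrdef
    have hq1 : 1 < q := by
      have : 0 < βt * η₀ + 2 * η₀ ^ 2 * L ^ 2 / Be := by positivity
      simp only [hqdef]; linarith
    have hqne : q ≠ 1 := ne_of_gt hq1
    rw [ctil_closed Be q r hqne Be 0 (by omega)]
    congr 1
    have h1 : q - 1 = βt * η₀ + 2 * η₀ ^ 2 * L ^ 2 / Be := by simp [hqdef]; ring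
    rw [h1, hrdef]
    have hd1 : (0:ℝ) < βt * η₀ + 2 * η₀ ^ 2 * L ^ 2 / Be := by positivity
    have hd2 : (0:ℝ) < βt + 2 * η₀ * L ^ 2 / Be := by positivity
    field_simp
  refine ⟨key, ?_, ?_⟩
  · -- part 2
    intro η₀ βt hη₀ hβt η hηpos hηle _ hcond t ht1 htBe
    set q : ℝ := 1 + βt * η₀ + 2 * η₀ ^ 2 * L ^ 2 / Be with hqdef
    set r : ℝ := η₀ ^ 2 * L ^ 3 / Be with hrdef
    have hq1 : 1 < q := by
      have : 0 < βt * η₀ + 2 * η₀ ^ 2 * L ^ 2 / Be := by positivity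
      simp only [hqdef]; linarith
    have hqne : q ≠ 1 := ne_of_gt hq1
    have hq0 : (0:ℝ) ≤ q := by linarith
    have hDpos : (0:ℝ) ≤ r / (q - 1) := by
      apply div_nonneg
      · simp only [hrdef]; positivity
      · linarith
    set c0 : ℝ := ctil Be q r 0 with hc0def
    set c : ℝ := ctil Be q r (t + 1) with hcdef
    have hc0 : c0 = (q ^ Be - 1) * (r / (q - 1)) := ctil_closed Be q r hqne Be 0 (by omega)
    -- c nonneg and c ≤ c0
    have hcfacts : 0 ≤ c ∧ c ≤ c0 := by
      rcases le_or_gt Be (t + 1) with h | h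
      · rw [hcdef, ctil_stop Be q r (t+1) h]
        refine ⟨le_refl 0, ?_⟩
        rw [hc0]
        apply mul_nonneg _ hDpos
        have : (1:ℝ) ≤ q ^ Be := one_le_pow₀ (le_of_lt hq1)
        linarith
      · have hc : c = (q ^ (Be - (t+1)) - 1) * (r / (q - 1)) :=
          ctil_closed Be q r hqne (Be - (t+1)) (t+1) (by omega)
        constructor
        · rw [hc]
          apply mul_nonneg _ hDpos
          have : (1:ℝ) ≤ q ^ (Be - (t+1)) := one_le_pow₀ (le_of_lt hq1)
          linarith
        · rw [hc, hc0]
          apply mul_le_mul_of_nonneg_right _ hDpos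
          have : q ^ (Be - (t+1)) ≤ q ^ Be :=
            pow_le_pow_right₀ (le_of_lt hq1) (by omega)
          linarith
    obtain ⟨hcnn, hcle⟩ := hcfacts
    have hηt := hηpos t
    have hηtle := hηle t
    have hsum : c / βt + η t * L + 2 * c * η t < 1 := by
      have h1 : c / βt ≤ c0 / βt := by gcongr
      have h2 : η t * L ≤ η₀ * L := mul_le_mul_of_nonneg_right hηtle (le_of_lt hL)
      have h3 : 2 * c * η t ≤ 2 * c0 * η₀ := by nlinarith
      have h4 : c0 * (1 / βt + 2 * η₀) = c0 / βt + 2 * c0 * η₀ := by ring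
      linarith [hcond, h4]
    have hgoal : η t - c / βt * η t - η t ^ 2 * L - 2 * c * η t ^ 2
        = η t * (1 - (c / βt + η t * L + 2 * c * η t)) := by ring
    rw [hgoal]
    apply mul_pos hηt
    linarith
  · -- part 3: existence via continuity
    set F : ℝ → ℝ := fun x =>
      ((1 + 2 * x + 2 * x ^ 2 * L ^ 2 / Be) ^ Be - 1) *
        ((x * L ^ 3 / Be) / (2 + 2 * x * L ^ 2 / Be)) * (1 / 2 + 2 * x) + x * L
      with hFdef
    have hcont : ContinuousAt F 0 := by
      apply ContinuousAt.add _ (by fun_prop)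
      apply ContinuousAt.mul _ (by fun_prop)
      apply ContinuousAt.mul (by fun_prop)
      apply ContinuousAt.div (by fun_prop) (by fun_prop)
      norm_num
    have hF0 : F 0 = 0 := by simp [hFdef]
    have hev : ∀ᶠ x in nhds (0:ℝ), F x < 1 := by
      have h := hcont.tendsto
      rw [hF0] at h
      exact h (Iio_mem_nhds one_pos)
    have hev' : ∀ᶠ x in nhdsWithin (0:ℝ) (Set.Ioi 0), F x < 1 :=
      hev.filter_mono nhdsWithin_le_nhds
    obtain ⟨x, hxF, hx0⟩ := (hev'.and eventually_mem_nhdsWithin).exists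
    refine ⟨x, 2, hx0, by norm_num, ?_⟩
    rw [key x 2 hx0 (by norm_num)]
    simpa [hFdef] using hxF
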